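/- arXiv:2605.06694 — 6 statements merged into one kernel-verified Lean document; each statement's English description precedes it below -/
import Mathlib

section
/- Let (X,d) be a suprametric space with constant ρ ≥ 0 and let (x_k) be a sequence in X. Then for all n ≥ 0 and p ≥ 1, 1 + ρ·d(x_n, x_{n+p}) ≤ ∏_{k=n}^{n+p-1} (1 + ρ·d(x_k, x_{k+1})). -/
open Filter Topology

structure IsSuprametric {X : Type*} (d : X → X → ℝ) (ρ : ℝ) : Prop where
  nonneg : ∀ x y, 0 ≤ d x y
  eq_zero_iff : ∀ x y, d x y = 0 ↔ x = y
  symm : ∀ x y, d x y = d y x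
  triangle : ∀ x y z, d x y ≤ d x z + d z y + ρ * d x z * d z y

def IsCauchySeq {X : Type*} (d : X → X → ℝ) (x : ℕ → X) : Prop :=
  ∀ ε > 0, ∃ N, ∀ m ≥ N, ∀ n ≥ N, d (x m) (x n) < ε

def ConvergesTo {X : Type*} (d : X → X → ℝ) (x : ℕ → X) (z : X) : Prop :=
  Tendsto (fun n => d (x n) z) atTop (𝓝 0)

def IsCompleteSupra {X : Type*} (d : X → X → ℝ) : Prop :=
  ∀ x : ℕ → X, IsCauchySeq d x → ∃ z, ConvergesTo d x z

/-!
Multiplying the suprametric inequality by `ρ ≥ 0` and adding `1` gives the multiplicative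
triangle inequality `1 + ρ d(x, y) ≤ (1 + ρ d(x, z)) (1 + ρ d(z, y))`, since the right-hand side
expands to `1 + ρ (d(x, z) + d(z, y) + ρ d(x, z) d(z, y))`. Iterating it along the sequence gives
the product bound.
-/

namespace IsSuprametric

variable {X : Type*} {d : X → X → ℝ} {ρ : ℝ}

theorem one_add_mul_nonneg (hd : IsSuprametric d ρ) (hρ : 0 ≤ ρ) (x y : X) :
    0 ≤ 1 + ρ * d x y := by
  have := mul_nonneg hρ (hd.nonneg x y)
  linarith

theorem one_add_mul_le_mul (hd : IsSuprametric d ρ) (hρ : 0 ≤ ρ) (x y z : X) :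
    1 + ρ * d x y ≤ (1 + ρ * d x z) * (1 + ρ * d z y) :=
  calc 1 + ρ * d x y ≤ 1 + ρ * (d x z + d z y + ρ * d x z * d z y) := by
        gcongr; exact hd.triangle x y z
    _ = (1 + ρ * d x z) * (1 + ρ * d z y) := by ring

theorem one_add_mul_le_prod_Ico (hd : IsSuprametric d ρ) (hρ : 0 ≤ ρ) (x : ℕ → X) (n p : ℕ) :
    1 + ρ * d (x n) (x (n + p)) ≤ ∏ k ∈ Finset.Ico n (n + p), (1 + ρ * d (x k) (x (k + 1))) := by
  induction p with
  | zero => simp [(hd.eq_zero_iff _ _).2 rfl]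
  | succ p ih =>
    rw [← add_assoc, Finset.prod_Ico_succ_top (Nat.le_add_right n p)]
    calc 1 + ρ * d (x n) (x (n + p + 1))
        ≤ (1 + ρ * d (x n) (x (n + p))) * (1 + ρ * d (x (n + p)) (x (n + p + 1))) :=
          hd.one_add_mul_le_mul hρ _ _ _
      _ ≤ _ := mul_le_mul_of_nonneg_right ih (hd.one_add_mul_nonneg hρ _ _)

end IsSuprametric

theorem stmt1 {X : Type*} (d : X → X → ℝ) (ρ : ℝ) (hρ : 0 ≤ ρ)
    (hd : IsSuprametric d ρ) (x : ℕ → X) :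
    ∀ n p : ℕ, 1 ≤ p →
      1 + ρ * d (x n) (x (n + p)) ≤
        ∏ k ∈ Finset.Ico n (n + p), (1 + ρ * d (x k) (x (k + 1))) :=
  fun n p _ => hd.one_add_mul_le_prod_Ico hρ x n p
end

section
/- Let (X,d) be a suprametric space with constant ρ > 0 and let (x_k) be a sequence in X such that the series ∑_{k=0}^∞ d(x_k, x_{k+1}) converges. Then for all n and p ≥ 1, d(x_n, x_{n+p}) ≤ (exp(ρ·R_n) − 1)/ρ, where R_n = ∑_{k=n}^∞ d(x_k, x_{k+1}). In particular (x_k) is a Cauchy sequence with respect to d. -/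
/-!
Expanding the product shows that the suprametric inequality says exactly
`1 + ρ d(x, y) ≤ (1 + ρ d(x, z)) (1 + ρ d(z, y))`, so `log (1 + ρ d)` satisfies the ordinary
triangle inequality. Along a chain this gives
`1 + ρ d(xₙ, xₙ₊ₚ) ≤ ∏ (1 + ρ d(xₖ, xₖ₊₁)) ≤ exp (ρ Rₙ)`, and `Rₙ → 0` yields the Cauchy property.
-/

open Filter Topology

namespace IsSuprametric

variable {X : Type*} {d : X → X → ℝ} {ρ : ℝ}

theorem one_add_mul_le_exp_sum (hd : IsSuprametric d ρ) (hρ : 0 ≤ ρ) (x : ℕ → X) (n p : ℕ) :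
    1 + ρ * d (x n) (x (n + p)) ≤
      Real.exp (ρ * ∑ k ∈ Finset.range p, d (x (n + k)) (x (n + k + 1))) := by
  induction p with
  | zero => simp [(hd.eq_zero_iff _ _).mpr rfl]
  | succ p ih =>
    have hstep : 1 + ρ * d (x (n + p)) (x (n + p + 1)) ≤
        Real.exp (ρ * d (x (n + p)) (x (n + p + 1))) := by
      linarith [Real.add_one_le_exp (ρ * d (x (n + p)) (x (n + p + 1)))]
    have hnonneg : 0 ≤ 1 + ρ * d (x (n + p)) (x (n + p + 1)) := by
      nlinarith [hd.nonneg (x (n + p)) (x (n + p + 1))]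
    calc 1 + ρ * d (x n) (x (n + (p + 1)))
        ≤ (1 + ρ * d (x n) (x (n + p))) * (1 + ρ * d (x (n + p)) (x (n + p + 1))) :=
          hd.one_add_mul_le_mul hρ _ _ _
      _ ≤ Real.exp (ρ * ∑ k ∈ Finset.range p, d (x (n + k)) (x (n + k + 1))) *
            Real.exp (ρ * d (x (n + p)) (x (n + p + 1))) :=
          mul_le_mul ih hstep hnonneg (Real.exp_pos _).le
      _ = Real.exp (ρ * ∑ k ∈ Finset.range (p + 1), d (x (n + k)) (x (n + k + 1))) := by
          rw [← Real.exp_add, Finset.sum_range_succ, mul_add]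

theorem le_exp_tsum_sub_one_div (hd : IsSuprametric d ρ) (hρ : 0 < ρ) (x : ℕ → X)
    (hsum : Summable fun k => d (x k) (x (k + 1))) (n p : ℕ) :
    d (x n) (x (n + p)) ≤
      (Real.exp (ρ * ∑' k : ℕ, d (x (n + k)) (x (n + k + 1))) - 1) / ρ := by
  have htail : Summable fun k => d (x (n + k)) (x (n + k + 1)) := by
    simpa only [add_comm n] using (summable_nat_add_iff n).mpr hsum
  have hpartial : ∑ k ∈ Finset.range p, d (x (n + k)) (x (n + k + 1)) ≤
      ∑' k : ℕ, d (x (n + k)) (x (n + k + 1)) :=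
    htail.sum_le_tsum _ fun k _ => hd.nonneg _ _
  rw [le_div_iff₀ hρ]
  have hexp := Real.exp_le_exp.mpr (mul_le_mul_of_nonneg_left hpartial hρ.le)
  linarith [hd.one_add_mul_le_exp_sum hρ.le x n p]

end IsSuprametric

theorem isCauchySeq_of_le_of_tendsto {X : Type*} {d : X → X → ℝ}
    (hsymm : ∀ x y, d x y = d y x) {x : ℕ → X} {b : ℕ → ℝ}
    (hle : ∀ n p, d (x n) (x (n + p)) ≤ b n) (hb : Tendsto b atTop (𝓝 0)) :
    IsCauchySeq d x := by
  intro ε hε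
  obtain ⟨N, hN⟩ := (hb.eventually (eventually_lt_nhds hε)).exists_forall_of_atTop
  have hforward : ∀ m n, N ≤ m → m ≤ n → d (x m) (x n) < ε := fun m n hm hmn => by
    obtain ⟨p, rfl⟩ := Nat.exists_eq_add_of_le hmn
    exact (hle m p).trans_lt (hN m hm)
  refine ⟨N, fun m hm n hn => ?_⟩
  rcases le_total m n with hmn | hnm
  · exact hforward m n hm hmn
  · exact hsymm (x m) (x n) ▸ hforward n m hn hnm

theorem stmt2 {X : Type*} (d : X → X → ℝ) (ρ : ℝ) (hρ : 0 < ρ)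
    (hd : IsSuprametric d ρ) (x : ℕ → X)
    (hsum : Summable fun k => d (x k) (x (k + 1))) :
    (∀ n p : ℕ, 1 ≤ p →
      d (x n) (x (n + p)) ≤
        (Real.exp (ρ * ∑' k : ℕ, d (x (n + k)) (x (n + k + 1))) - 1) / ρ)
    ∧ IsCauchySeq d x := by
  refine ⟨fun n p _ => hd.le_exp_tsum_sub_one_div hρ x hsum n p,
    isCauchySeq_of_le_of_tendsto hd.symm (hd.le_exp_tsum_sub_one_div hρ x hsum) ?_⟩
  have htail : Tendsto (fun n => ∑' k : ℕ, d (x (n + k)) (x (n + k + 1))) atTop (𝓝 0) := by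
    simpa only [add_comm _ (_ : ℕ)] using tendsto_sum_nat_add fun k => d (x k) (x (k + 1))
  have hcont : Continuous fun t : ℝ => (Real.exp (ρ * t) - 1) / ρ := by fun_prop
  simpa [Function.comp_def] using (hcont.tendsto 0).comp htail
end

section
/- Let (X,d) be a suprametric space with constant ρ ≥ 0. Then the function D(x,y) = d(x,y)/(1 + ρ·d(x,y)) satisfies the ordinary triangle inequality D(x,y) ≤ D(x,z) + D(z,y) for all x,y,z ∈ X, and hence D is a metric on X. -/
open Filter Topology

theorem stmt4 {X : Type*} (d : X → X → ℝ) (ρ : ℝ) (hρ : 0 ≤ ρ)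
    (hd : IsSuprametric d ρ) :
    (∀ x y z, d x y / (1 + ρ * d x y) ≤
        d x z / (1 + ρ * d x z) + d z y / (1 + ρ * d z y))
    ∧ (∀ x y, 0 ≤ d x y / (1 + ρ * d x y))
    ∧ (∀ x y, d x y / (1 + ρ * d x y) = 0 ↔ x = y)
    ∧ (∀ x y, d x y / (1 + ρ * d x y) = d y x / (1 + ρ * d y x)) := by
  
  have hden : ∀ t : ℝ, 0 ≤ t → 0 < 1 + ρ * t := fun t ht => by positivity
  have hmono : ∀ s t : ℝ, 0 ≤ s → s ≤ t → s / (1 + ρ * s) ≤ t / (1 + ρ * t) := by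
    intro s t hs hst
    rw [div_le_div_iff₀ (hden s hs) (hden t (hs.trans hst))]
    nlinarith
  refine ⟨?_, ?_, ?_, ?_⟩
  · intro x y z
    have a := hd.nonneg x z
    have b := hd.nonneg z y
    have h1 : d x y / (1 + ρ * d x y) ≤
        (d x z + d z y + ρ * d x z * d z y) / (1 + ρ * (d x z + d z y + ρ * d x z * d z y)) :=
      hmono _ _ (hd.nonneg x y) (hd.triangle x y z)
    refine h1.trans ?_
    rw [div_add_div _ _ (ne_of_gt (hden _ a)) (ne_of_gt (hden _ b)),
      div_le_div_iff₀ (hden _ (by nlinarith [mul_nonneg (mul_nonneg hρ a) b])) (by positivity)]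
    nlinarith [mul_nonneg (mul_nonneg (mul_nonneg hρ a) b) (mul_pos (hden _ a) (hden _ b)).le]
  · intro x y
    have := hd.nonneg x y
    positivity
  · intro x y
    rw [div_eq_zero_iff]
    constructor
    · rintro (h | h)
      · exact (hd.eq_zero_iff x y).1 h
      · exact absurd h (ne_of_gt (hden _ (hd.nonneg x y)))
    · intro h; exact Or.inl ((hd.eq_zero_iff x y).2 h)
  · intro x y; rw [hd.symm x y]
end

section
/- Let T : X → X satisfy the convex contraction condition of order m: there exist nonnegative reals a_0,…,a_{m−1} with α = ∑ a_i < 1 such that d(T^m x, T^m y) ≤ ∑_{i=0}^{m−1} a_i · d(T^i x, T^i y) for all x,y in a suprametric space (X,d). Fix x_0 ∈ X and set x_n = T^n x_0 and μ = ∑_{i=0}^{m−1} d(x_i, x_{i+1}). Then for all n ≥ m, d(x_n, x_{n+1}) ≤ α^⌊n/m⌋ · μ. In particular d(x_n, x_{n+1}) → 0 as n → ∞. -/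
open Filter Topology

/-!
Write `D n = d(xₙ, xₙ₊₁)`. Applying the contraction condition to the pair `(xₙ, xₙ₊₁)` gives the
linear recurrence inequality `D (n + m) ≤ ∑ aᵢ D (n + i)`. Each block of `m` consecutive steps
therefore multiplies the bound by at most `α`, which by strong induction yields
`D n ≤ α ^ (n / m) μ`; since `α < 1` this tends to `0`.
-/

open Finset

theorem le_pow_div_mul_sum_of_le_sum_mul {D a : ℕ → ℝ} {m : ℕ} (hm : 0 < m)
    (hD : ∀ n, 0 ≤ D n) (ha : ∀ i, 0 ≤ a i) (hα : ∑ i ∈ range m, a i ≤ 1)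
    (hrec : ∀ n, D (n + m) ≤ ∑ i ∈ range m, a i * D (n + i)) (n : ℕ) :
    D n ≤ (∑ i ∈ range m, a i) ^ (n / m) * ∑ i ∈ range m, D i := by
  set α := ∑ i ∈ range m, a i
  set μ := ∑ i ∈ range m, D i
  have hα0 : 0 ≤ α := sum_nonneg fun i _ => ha i
  have hμ0 : 0 ≤ μ := sum_nonneg fun i _ => hD i
  induction n using Nat.strong_induction_on with
  | _ n ih =>
    rcases lt_or_ge n m with hlt | hge
    · rw [Nat.div_eq_of_lt hlt, pow_zero, one_mul]
      exact single_le_sum (fun i _ => hD i) (mem_range.2 hlt)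
    obtain ⟨k, rfl⟩ := Nat.exists_eq_add_of_le' hge
    have hshift : ∀ i ∈ range m, a i * D (k + i) ≤ a i * (α ^ (k / m) * μ) := by
      intro i hi
      have hlt : k + i < k + m := by have := mem_range.1 hi; omega
      have hexp : α ^ ((k + i) / m) ≤ α ^ (k / m) :=
        pow_le_pow_of_le_one hα0 hα (Nat.div_le_div_right (Nat.le_add_right k i))
      exact mul_le_mul_of_nonneg_left
        ((ih _ hlt).trans (mul_le_mul_of_nonneg_right hexp hμ0)) (ha i)
    calc D (k + m) ≤ ∑ i ∈ range m, a i * D (k + i) := hrec k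
      _ ≤ ∑ i ∈ range m, a i * (α ^ (k / m) * μ) := sum_le_sum hshift
      _ = α ^ ((k + m) / m) * μ := by
        rw [← sum_mul, Nat.add_div_right k hm, pow_succ']
        ring

theorem tendsto_pow_div_mul_nhds_zero {α : ℝ} (hα0 : 0 ≤ α) (hα1 : α < 1) {m : ℕ} (hm : m ≠ 0)
    (μ : ℝ) : Tendsto (fun n => α ^ (n / m) * μ) atTop (𝓝 0) := by
  simpa using ((tendsto_pow_atTop_nhds_zero_of_lt_one hα0 hα1).comp
    (Nat.tendsto_div_const_atTop hm)).mul_const μ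

theorem d_iterate_add_succ_le_sum_mul {X : Type*} (d : X → X → ℝ) (T : X → X) (m : ℕ) (a : ℕ → ℝ)
    (hconv : ∀ x y, d (T^[m] x) (T^[m] y) ≤ ∑ i ∈ range m, a i * d (T^[i] x) (T^[i] y))
    (x0 : X) (n : ℕ) :
    d (T^[n + m] x0) (T^[n + m + 1] x0) ≤
      ∑ i ∈ range m, a i * d (T^[n + i] x0) (T^[n + i + 1] x0) := by
  have hiter : ∀ i j, T^[i] (T^[j] x0) = T^[j + i] x0 := fun i j => by
    rw [← Function.iterate_add_apply, add_comm]
  simpa only [hiter, add_right_comm] using hconv (T^[n] x0) (T^[n + 1] x0)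

theorem stmt5_general {X : Type*} (d : X → X → ℝ) (ρ : ℝ)
    (hd : IsSuprametric d ρ) (T : X → X) (m : ℕ) (hm : 1 ≤ m)
    (a : ℕ → ℝ) (ha : ∀ i, 0 ≤ a i)
    (hα : ∑ i ∈ Finset.range m, a i < 1)
    (hconv : ∀ x y, d (T^[m] x) (T^[m] y) ≤
        ∑ i ∈ Finset.range m, a i * d (T^[i] x) (T^[i] y))
    (x0 : X) :
    (∀ n, m ≤ n → d (T^[n] x0) (T^[n + 1] x0) ≤
        (∑ i ∈ Finset.range m, a i) ^ (n / m) *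
          ∑ i ∈ Finset.range m, d (T^[i] x0) (T^[i + 1] x0))
    ∧ Tendsto (fun n => d (T^[n] x0) (T^[n + 1] x0)) atTop (𝓝 0) := by
  have hbound := le_pow_div_mul_sum_of_le_sum_mul (D := fun n => d (T^[n] x0) (T^[n + 1] x0))
    hm (fun n => hd.nonneg _ _) ha hα.le (d_iterate_add_succ_le_sum_mul d T m a hconv x0)
  exact ⟨fun n _ => hbound n, squeeze_zero (fun n => hd.nonneg _ _) hbound
    (tendsto_pow_div_mul_nhds_zero (sum_nonneg fun i _ => ha i) hα (by omega) _)⟩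

theorem stmt5 {X : Type*} (d : X → X → ℝ) (ρ : ℝ) (hρ : 0 ≤ ρ)
    (hd : IsSuprametric d ρ) (T : X → X) (m : ℕ) (hm : 1 ≤ m)
    (a : ℕ → ℝ) (ha : ∀ i, 0 ≤ a i)
    (hα : ∑ i ∈ Finset.range m, a i < 1)
    (hconv : ∀ x y, d (T^[m] x) (T^[m] y) ≤
        ∑ i ∈ Finset.range m, a i * d (T^[i] x) (T^[i] y))
    (x0 : X) :
    (∀ n, m ≤ n → d (T^[n] x0) (T^[n + 1] x0) ≤
        (∑ i ∈ Finset.range m, a i) ^ (n / m) *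
          ∑ i ∈ Finset.range m, d (T^[i] x0) (T^[i + 1] x0))
    ∧ Tendsto (fun n => d (T^[n] x0) (T^[n + 1] x0)) atTop (𝓝 0) :=
  stmt5_general d ρ hd T m hm a ha hα hconv x0
end

section
/- Let (X,d) be a suprametric space, λ ∈ [0,1), and suppose x* ∈ X satisfies T^{n} x* = x* for some positive integer n, where for all y ∈ X, d(T^{n} x*, T^{n} y) ≤ λ·max({d(x*, T^i y) : 0 ≤ i ≤ n} ∪ {d(x*, T^j x*) : 0 ≤ j ≤ n}). Then T x* = x* (i.e., a periodic point satisfying the Ćirić quasi-contraction condition at itself is a fixed point). -/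
open Filter Topology

noncomputable def ciricMax {X : Type*} (d : X → X → ℝ) (T : X → X)
    (n : ℕ) (x y : X) : ℝ :=
  (Finset.range (n + 1)).sup'
    (Finset.nonempty_range_iff.mpr (Nat.succ_ne_zero n))
    (fun i => max (d x (T^[i] y)) (d x (T^[i] x)))

theorem stmt12 {X : Type*} (d : X → X → ℝ) (ρ : ℝ) (hρ : 0 ≤ ρ)
    (hd : IsSuprametric d ρ) (T : X → X)
    (lam : ℝ) (hlam0 : 0 ≤ lam) (hlam1 : lam < 1)
    (xs : X) (n : ℕ) (hn : 1 ≤ n) (hper : T^[n] xs = xs)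
    (hT : ∀ y : X, d (T^[n] xs) (T^[n] y) ≤ lam * ciricMax d T n xs y) :
    T xs = xs := by
  have hne : (Finset.range (n + 1)).Nonempty :=
    Finset.nonempty_range_iff.mpr (Nat.succ_ne_zero n)
  set M : ℝ := (Finset.range (n + 1)).sup' hne (fun m => d xs (T^[m] xs)) with hM
  have per : ∀ k, T^[k] xs = T^[k % n] xs := by
    intro k
    induction k using Nat.strong_induction_on with
    | _ k ih =>
      rcases lt_or_ge k n with h | h
      · rw [Nat.mod_eq_of_lt h]
      · have hk : T^[k] xs = T^[k - n] xs := by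
          nth_rewrite 1 [show k = (k - n) + n by omega]
          rw [Function.iterate_add_apply, hper]
        rw [hk, ih (k - n) (by omega), Nat.mod_eq_sub_mod h]
  have bound : ∀ k, d xs (T^[k] xs) ≤ M := by
    intro k
    rw [per k]
    exact Finset.le_sup' (fun m => d xs (T^[m] xs))
      (Finset.mem_range.mpr (by have := Nat.mod_lt k (show 0 < n by omega); omega))
  have cbound : ∀ j, ciricMax d T n xs (T^[j] xs) ≤ M := by
    intro j
    apply Finset.sup'_le
    intro i _
    apply max_le
    · rw [← Function.iterate_add_apply]
      exact bound (i + j)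
    · exact bound i
  have key : ∀ j, d xs (T^[j] xs) ≤ lam * M := by
    intro j
    have h1 := hT (T^[j] xs)
    have h2 : T^[n] (T^[j] xs) = T^[j] xs := by
      rw [← Function.iterate_add_apply, per (n + j), per j]
      simp [Nat.add_mod_left]
    rw [hper, h2] at h1
    calc d xs (T^[j] xs) ≤ lam * ciricMax d T n xs (T^[j] xs) := h1
      _ ≤ lam * M := by
          apply mul_le_mul_of_nonneg_left (cbound j) hlam0
  have hMle : M ≤ lam * M := by
    apply Finset.sup'_le
    intro j _
    exact key j
  have hM0 : 0 ≤ M := le_trans (hd.nonneg xs (T^[0] xs)) (bound 0)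
  have hMzero : M = 0 := by nlinarith
  have h1 : d xs (T^[1] xs) = 0 :=
    le_antisymm (by rw [← hMzero]; exact bound 1) (hd.nonneg _ _)
  have := (hd.eq_zero_iff xs (T^[1] xs)).mp h1
  simpa [Function.iterate_one] using this.symm
end

section
/- Let K : [a,b]×[a,b] → ℝ be continuous with |K(x,t)| ≤ M and L = M(b−a) < 1. Define the suprametric d(f,g) = ‖f−g‖_∞(‖f−g‖_∞ + λ) on C[a,b] for a fixed λ > 0, and T(f)(x) = ∫_a^b K(x,t)f(t)dt. Then d(T²f, T²g) ≤ L²·d(f,g) for all f,g ∈ C[a,b], i.e., T is a convex contraction of order 2 on (C[a,b], d) with coefficients a₀ = L², a₁ = 0. -/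
open MeasureTheory

theorem stmt19 (a b : ℝ) (hab : a ≤ b) (K : ℝ → ℝ → ℝ)
    (hK : Continuous fun p : ℝ × ℝ => K p.1 p.2) (M : ℝ)
    (hM : ∀ x ∈ Set.Icc a b, ∀ t ∈ Set.Icc a b, |K x t| ≤ M)
    (hL : M * (b - a) < 1) (lam : ℝ) (hlam : 0 < lam)
    (T : C(Set.Icc a b, ℝ) → C(Set.Icc a b, ℝ))
    (hT : ∀ (f : C(Set.Icc a b, ℝ)) (x : Set.Icc a b),
      T f x = ∫ t in a..b, K x t * f (Set.projIcc a b hab t)) :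
    ∀ f g : C(Set.Icc a b, ℝ),
      ‖T (T f) - T (T g)‖ * (‖T (T f) - T (T g)‖ + lam) ≤
        (M * (b - a)) ^ 2 * (‖f - g‖ * (‖f - g‖ + lam)) := by
  have haa : a ∈ Set.Icc a b := ⟨le_refl a, hab⟩
  have hM0 : 0 ≤ M := le_trans (abs_nonneg _) (hM a haa a haa)
  have hba : 0 ≤ b - a := sub_nonneg.2 hab
  have key : ∀ f g : C(Set.Icc a b, ℝ), ‖T f - T g‖ ≤ M * (b - a) * ‖f - g‖ := by
    intro f g
    refine (ContinuousMap.norm_le _ (by positivity)).2 ?_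
    intro x
    have hint : ∀ h : C(Set.Icc a b, ℝ),
        IntervalIntegrable (fun t => K x t * h (Set.projIcc a b hab t)) volume a b := by
      intro h
      apply Continuous.intervalIntegrable
      exact ((hK.comp (continuous_const.prodMk continuous_id)).mul
        (h.continuous.comp continuous_projIcc))
    have heq : (T f - T g) x = ∫ t in a..b, K x t * ((f - g) (Set.projIcc a b hab t)) := by
      rw [ContinuousMap.sub_apply, hT, hT, ← intervalIntegral.integral_sub (hint f) (hint g)]
      congr 1; ext t; simp [ContinuousMap.sub_apply]; ring
    rw [heq]
    calc ‖∫ t in a..b, K x t * ((f - g) (Set.projIcc a b hab t))‖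
        ≤ (M * ‖f - g‖) * |b - a| := by
          apply intervalIntegral.norm_integral_le_of_norm_le_const
          intro t ht
          rw [Set.uIoc_of_le hab] at ht
          have htI : t ∈ Set.Icc a b := ⟨ht.1.le, ht.2⟩
          rw [Real.norm_eq_abs, abs_mul]
          have h1 : |K x t| ≤ M := hM x x.2 t htI
          have h2 : |(f - g) (Set.projIcc a b hab t)| ≤ ‖f - g‖ :=
            (f - g).norm_coe_le_norm _
          exact mul_le_mul h1 h2 (abs_nonneg _) hM0
      _ = M * (b - a) * ‖f - g‖ := by rw [abs_of_nonneg hba]; ring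
  intro f g
  have h1 : ‖T (T f) - T (T g)‖ ≤ M * (b - a) * (M * (b - a) * ‖f - g‖) :=
    (key (T f) (T g)).trans (by
      have := key f g
      have hL0 : 0 ≤ M * (b - a) := by positivity
      nlinarith)
  have hu : 0 ≤ ‖T (T f) - T (T g)‖ := norm_nonneg _
  have hv : 0 ≤ ‖f - g‖ := norm_nonneg _
  have hL0 : 0 ≤ M * (b - a) := by positivity
  set L := M * (b - a) with hLdef
  set u := ‖T (T f) - T (T g)‖
  set v := ‖f - g‖
  have hL2 : L ^ 2 ≤ 1 := by nlinarith
  have h2 : u * (u + lam) ≤ (L ^ 2 * v) * (L ^ 2 * v + lam) := by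
    have h1' : u ≤ L ^ 2 * v := by nlinarith
    exact mul_le_mul h1' (by linarith) (by linarith) (by positivity)
  have h3 : (L ^ 2 * v) * (L ^ 2 * v + lam) ≤ L ^ 2 * (v * (v + lam)) := by
    nlinarith [mul_nonneg (mul_nonneg (sq_nonneg L) (mul_nonneg hv hv)) (sub_nonneg.2 hL2)]
  linarith
end
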